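/- arXiv:2010.11994 — 2 statements merged into one kernel-verified Lean document; each statement's English description precedes it below -/
import Mathlib

section
/- Suppose a matrix Σ₀ ∈ R^{d×d} satisfies the compatibility condition for a set S with |S| = s₀ and compatibility constant φ²(Σ₀,S) > 0, and suppose ‖Σ₀ − Σ₁‖_∞ ≤ λ with 32λs₀/φ²(Σ₀,S) ≤ 1. Then Σ₁ satisfies the compatibility condition for S with φ²(Σ₁,S) ≥ φ²(Σ₀,S)/2. -/
/-!
On the cone `‖x_{Sᶜ}‖₁ ≤ 3 ‖x_S‖₁` one has `‖x‖₁ ≤ 4 ‖x_S‖₁`, so an entrywise bound `λ` on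
`Σ₀ - Σ₁` gives `|xᵀ(Σ₀ - Σ₁)x| ≤ λ ‖x‖₁² ≤ 16 λ ‖x_S‖₁²`. Multiplying by `s₀` and using
`32 λ s₀ ≤ φ²(Σ₀, S)`, the quadratic form of `Σ₁` loses at most `φ²(Σ₀, S) ‖x_S‖₁² / 2`
against that of `Σ₀`.
-/

open Matrix BigOperators

/-- The compatibility constant φ²(M, S) with sparsity parameter s₀. -/
noncomputable def compat {d : ℕ} (s₀ : ℕ) (M : Matrix (Fin d) (Fin d) ℝ)
    (S : Finset (Fin d)) : ℝ :=
  sInf { r | ∃ x : Fin d → ℝ, (∑ i ∈ S, |x i|) ≠ 0 ∧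
      (∑ i ∈ Sᶜ, |x i|) ≤ 3 * ∑ i ∈ S, |x i| ∧
      r = (s₀ : ℝ) * (x ⬝ᵥ M.mulVec x) / (∑ i ∈ S, |x i|) ^ 2 }

theorem Matrix.abs_dotProduct_mulVec_le {n : Type*} [Fintype n] (A : Matrix n n ℝ) {lam : ℝ}
    (hA : ∀ i j, |A i j| ≤ lam) (x : n → ℝ) :
    |x ⬝ᵥ A *ᵥ x| ≤ lam * (∑ i, |x i|) ^ 2 := by
  have hexpand : x ⬝ᵥ A *ᵥ x = ∑ i, ∑ j, x i * A i j * x j := by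
    simp only [dotProduct, mulVec, Finset.mul_sum, mul_assoc]
  calc |x ⬝ᵥ A *ᵥ x| ≤ ∑ i, ∑ j, |x i * A i j * x j| := by
        rw [hexpand]
        exact (Finset.abs_sum_le_sum_abs _ _).trans
          (Finset.sum_le_sum fun i _ => Finset.abs_sum_le_sum_abs _ _)
    _ ≤ ∑ i, ∑ j, lam * (|x i| * |x j|) := by
        gcongr with i _ j _
        rw [abs_mul, abs_mul, mul_comm lam, mul_right_comm]
        gcongr
        exact hA i j
    _ = lam * (∑ i, |x i|) ^ 2 := by
        rw [sq, Finset.sum_mul_sum, Finset.mul_sum]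
        simp only [Finset.mul_sum]

def InCompatCone {d : ℕ} (S : Finset (Fin d)) (x : Fin d → ℝ) : Prop :=
  (∑ i ∈ S, |x i|) ≠ 0 ∧ (∑ i ∈ Sᶜ, |x i|) ≤ 3 * ∑ i ∈ S, |x i|

namespace InCompatCone

variable {d : ℕ} {S : Finset (Fin d)} {x : Fin d → ℝ}

theorem sum_abs_pos (hx : InCompatCone S x) : 0 < ∑ i ∈ S, |x i| :=
  (Finset.sum_nonneg fun i _ => abs_nonneg (x i)).lt_of_ne' hx.1

theorem sum_abs_le (hx : InCompatCone S x) : ∑ i, |x i| ≤ 4 * ∑ i ∈ S, |x i| := by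
  rw [← Finset.sum_add_sum_compl S]
  linarith [hx.2]

theorem nonneg_of_abs_le {lam : ℝ} (hx : InCompatCone S x) (A : Matrix (Fin d) (Fin d) ℝ)
    (hA : ∀ i j, |A i j| ≤ lam) : 0 ≤ lam := by
  obtain ⟨i, -, -⟩ := Finset.exists_ne_zero_of_sum_ne_zero hx.1
  exact (abs_nonneg _).trans (hA i i)

theorem abs_dotProduct_mulVec_le (hx : InCompatCone S x) (A : Matrix (Fin d) (Fin d) ℝ)
    {lam : ℝ} (hA : ∀ i j, |A i j| ≤ lam) :
    |x ⬝ᵥ A *ᵥ x| ≤ 16 * lam * (∑ i ∈ S, |x i|) ^ 2 := by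
  have hlam := hx.nonneg_of_abs_le A hA
  calc |x ⬝ᵥ A *ᵥ x| ≤ lam * (∑ i, |x i|) ^ 2 := A.abs_dotProduct_mulVec_le hA x
    _ ≤ lam * (4 * ∑ i ∈ S, |x i|) ^ 2 := by
        gcongr
        exact hx.sum_abs_le
    _ = 16 * lam * (∑ i ∈ S, |x i|) ^ 2 := by ring

end InCompatCone

section compat

variable {d : ℕ} {s₀ : ℕ} {M : Matrix (Fin d) (Fin d) ℝ} {S : Finset (Fin d)}

theorem compat_eq_sInf : compat s₀ M S = sInf { r | ∃ x, InCompatCone S x ∧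
    r = (s₀ : ℝ) * (x ⬝ᵥ M *ᵥ x) / (∑ i ∈ S, |x i|) ^ 2 } := by
  simp only [compat, InCompatCone, and_assoc]

theorem exists_inCompatCone_of_compat_pos (h : 0 < compat s₀ M S) :
    ∃ x, InCompatCone S x := by
  by_contra! hempty
  simp [compat_eq_sInf, hempty] at h

theorem compat_mul_sq_le (h : 0 < compat s₀ M S) {x : Fin d → ℝ} (hx : InCompatCone S x) :
    compat s₀ M S * (∑ i ∈ S, |x i|) ^ 2 ≤ s₀ * (x ⬝ᵥ M *ᵥ x) := by
  have hbdd : BddBelow { r | ∃ x, InCompatCone S x ∧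
      r = (s₀ : ℝ) * (x ⬝ᵥ M *ᵥ x) / (∑ i ∈ S, |x i|) ^ 2 } := by
    by_contra hunb
    rw [compat_eq_sInf, Real.sInf_of_not_bddBelow hunb] at h
    exact h.false
  rw [← le_div_iff₀ (pow_pos hx.sum_abs_pos 2), compat_eq_sInf]
  exact csInf_le hbdd ⟨x, hx, rfl⟩

theorem le_compat_of_forall (hne : ∃ x, InCompatCone S x) {c : ℝ}
    (h : ∀ x, InCompatCone S x → c * (∑ i ∈ S, |x i|) ^ 2 ≤ s₀ * (x ⬝ᵥ M *ᵥ x)) :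
    c ≤ compat s₀ M S := by
  obtain ⟨x₀, hx₀⟩ := hne
  rw [compat_eq_sInf]
  refine le_csInf ⟨_, x₀, hx₀, rfl⟩ ?_
  rintro _ ⟨x, hx, rfl⟩
  rw [le_div_iff₀ (pow_pos hx.sum_abs_pos 2)]
  exact h x hx

end compat

theorem stmt_4_general {d : ℕ} (Sig0 Sig1 : Matrix (Fin d) (Fin d) ℝ) (S : Finset (Fin d)) (s₀ : ℕ)
    (hφ : 0 < compat s₀ Sig0 S)
    (lam : ℝ) (hnorm : ∀ i j, |Sig0 i j - Sig1 i j| ≤ lam)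
    (hsmall : 32 * lam * s₀ / compat s₀ Sig0 S ≤ 1) :
    compat s₀ Sig0 S / 2 ≤ compat s₀ Sig1 S := by
  set φ := compat s₀ Sig0 S
  have hlam : 32 * lam * s₀ ≤ φ := (div_le_one hφ).mp hsmall
  refine le_compat_of_forall (exists_inCompatCone_of_compat_pos hφ) fun x hx => ?_
  have hSig0 := compat_mul_sq_le hφ hx
  have hdiff : x ⬝ᵥ Sig0 *ᵥ x - x ⬝ᵥ Sig1 *ᵥ x ≤ 16 * lam * (∑ i ∈ S, |x i|) ^ 2 := by
    rw [← dotProduct_sub, ← sub_mulVec]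
    exact (le_abs_self _).trans (hx.abs_dotProduct_mulVec_le (Sig0 - Sig1) hnorm)
  have hs₀ : (0 : ℝ) ≤ s₀ := s₀.cast_nonneg
  linarith [mul_le_mul_of_nonneg_left hdiff hs₀,
    mul_le_mul_of_nonneg_right hlam (sq_nonneg (∑ i ∈ S, |x i|))]

theorem stmt_4 {d : ℕ} (Sig0 Sig1 : Matrix (Fin d) (Fin d) ℝ) (S : Finset (Fin d)) (s₀ : ℕ)
    (hcard : S.card = s₀) (hφ : 0 < compat s₀ Sig0 S)
    (lam : ℝ) (hnorm : ∀ i j, |Sig0 i j - Sig1 i j| ≤ lam)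
    (hsmall : 32 * lam * s₀ / compat s₀ Sig0 S ≤ 1) :
    compat s₀ Sig0 S / 2 ≤ compat s₀ Sig1 S :=
  stmt_4_general Sig0 Sig1 S s₀ hφ lam hnorm hsmall
end

section
/- For any real numbers u, v ≥ 0, 4uv ≤ u² + 4v². Consequently, if 2E + λ‖w‖₁ ≤ 4λ‖w_S‖₁ and ‖w_S‖₁ ≤ √(s₀ wᵀΣ̂w)/φ with E ≥ (1/2)wᵀΣ̂w for a positive semi-definite Σ̂ and constants λ, φ > 0, then ‖w‖₁ ≤ 4λs₀/φ². -/
open Matrix BigOperators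

theorem four_mul_mul_le_sq_add_four_mul_sq (u v : ℝ) : 4 * u * v ≤ u ^ 2 + 4 * v ^ 2 := by
  nlinarith [sq_nonneg (u - 2 * v)]

theorem four_mul_mul_sqrt_mul_div_le {c q : ℝ} (hc : 0 ≤ c) (hq : 0 ≤ q) (lam φ : ℝ) :
    4 * lam * (√(c * q) / φ) ≤ q + 4 * lam ^ 2 * c / φ ^ 2 := by
  have h := four_mul_mul_le_sq_add_four_mul_sq (√q) (lam * √c / φ)
  rw [div_pow, mul_pow, Real.sq_sqrt hq, Real.sq_sqrt hc] at h
  calc 4 * lam * (√(c * q) / φ) = 4 * √q * (lam * √c / φ) := by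
        rw [Real.sqrt_mul hc]; ring
    _ ≤ q + 4 * (lam ^ 2 * c / φ ^ 2) := h
    _ = q + 4 * lam ^ 2 * c / φ ^ 2 := by ring

theorem le_of_two_mul_add_le_of_le_sqrt_div {a b c q E lam φ : ℝ} (hc : 0 ≤ c) (hq : 0 ≤ q)
    (hlam : 0 < lam) (h1 : 2 * E + lam * b ≤ 4 * lam * a) (h2 : a ≤ √(c * q) / φ)
    (h3 : (1 / 2) * q ≤ E) :
    b ≤ 4 * lam * c / φ ^ 2 := by
  have h2' : 4 * lam * a ≤ 4 * lam * (√(c * q) / φ) := by gcongr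
  have hamgm := four_mul_mul_sqrt_mul_div_le hc hq lam φ
  have hb : lam * b ≤ lam * (4 * lam * c / φ ^ 2) := by
    calc lam * b ≤ 4 * lam * (√(c * q) / φ) - q := by linarith
      _ ≤ 4 * lam ^ 2 * c / φ ^ 2 := by linarith
      _ = lam * (4 * lam * c / φ ^ 2) := by ring
  exact le_of_mul_le_mul_left hb hlam

theorem stmt_18_general {d : ℕ} (w : Fin d → ℝ) (S : Finset (Fin d)) (s₀ : ℕ)
    (Sig : Matrix (Fin d) (Fin d) ℝ) (hSig : Sig.PosSemidef)
    (lam φ E : ℝ) (hlam : 0 < lam)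
    (h1 : 2 * E + lam * (∑ i, |w i|) ≤ 4 * lam * ∑ i ∈ S, |w i|)
    (h2 : (∑ i ∈ S, |w i|) ≤ Real.sqrt ((s₀ : ℝ) * (w ⬝ᵥ Sig.mulVec w)) / φ)
    (h3 : (1 / 2) * (w ⬝ᵥ Sig.mulVec w) ≤ E) :
    (∀ u v : ℝ, 0 ≤ u → 0 ≤ v → 4 * u * v ≤ u ^ 2 + 4 * v ^ 2) ∧
    (∑ i, |w i|) ≤ 4 * lam * s₀ / φ ^ 2 := by
  have hq : 0 ≤ w ⬝ᵥ Sig.mulVec w := by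
    simpa using hSig.dotProduct_mulVec_nonneg w
  exact ⟨fun u v _ _ => four_mul_mul_le_sq_add_four_mul_sq u v,
    le_of_two_mul_add_le_of_le_sqrt_div (Nat.cast_nonneg s₀) hq hlam h1 h2 h3⟩

theorem stmt_18 {d : ℕ} (w : Fin d → ℝ) (S : Finset (Fin d)) (s₀ : ℕ)
    (hcard : S.card ≤ s₀) (Sig : Matrix (Fin d) (Fin d) ℝ) (hSig : Sig.PosSemidef)
    (lam φ E : ℝ) (hlam : 0 < lam) (hφ : 0 < φ)
    (h1 : 2 * E + lam * (∑ i, |w i|) ≤ 4 * lam * ∑ i ∈ S, |w i|)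
    (h2 : (∑ i ∈ S, |w i|) ≤ Real.sqrt ((s₀ : ℝ) * (w ⬝ᵥ Sig.mulVec w)) / φ)
    (h3 : (1 / 2) * (w ⬝ᵥ Sig.mulVec w) ≤ E) :
    (∀ u v : ℝ, 0 ≤ u → 0 ≤ v → 4 * u * v ≤ u ^ 2 + 4 * v ^ 2) ∧
    (∑ i, |w i|) ≤ 4 * lam * s₀ / φ ^ 2 :=
  stmt_18_general w S s₀ Sig hSig lam φ E hlam h1 h2 h3
end
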